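/- arXiv:1801.04920 — 6 statements merged into one kernel-verified Lean document; each statement's English description precedes it below -/
import Mathlib

section
/- For a finite alphabet 𝒳 and a type P ∈ 𝒫ₙ(𝒳), the type class T_P^n = {xⁿ ∈ 𝒳ⁿ : the empirical distribution of xⁿ equals P} satisfies (n+1)^{-|𝒳|} 2^{nH(P)} ≤ |T_P^n| ≤ 2^{nH(P)}. -/
open Finset Real
open scoped Classical BigOperators

/-- Probability of an event under a weight function on a finite sample space. -/
noncomputable def pr {Ω : Type*} [Fintype Ω] (p : Ω → ℝ) (E : Ω → Prop) : ℝ :=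
  ∑ ω, if E ω then p ω else 0

/-- `p` is a probability mass function. -/
def IsPMF {Ω : Type*} [Fintype Ω] (p : Ω → ℝ) : Prop :=
  (∀ ω, 0 ≤ p ω) ∧ ∑ ω, p ω = 1

/-- Shannon entropy (in bits) of a random variable `X` on a finite space. -/
noncomputable def Hent {Ω α : Type*} [Fintype Ω] [Fintype α] (p : Ω → ℝ) (X : Ω → α) : ℝ :=
  -∑ a, pr p (fun ω => X ω = a) * Real.logb 2 (pr p (fun ω => X ω = a))

/-- Mutual information (in bits) between random variables `X` and `Y`. -/
noncomputable def MI {Ω α β : Type*} [Fintype Ω] [Fintype α] [Fintype β]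
    (p : Ω → ℝ) (X : Ω → α) (Y : Ω → β) : ℝ :=
  Hent p X + Hent p Y - Hent p (fun ω => (X ω, Y ω))

/-- Kullback–Leibler divergence (in bits) between distributions on a finite set. -/
noncomputable def KL {S : Type*} [Fintype S] (Q P : S → ℝ) : ℝ :=
  ∑ s, Q s * Real.logb 2 (Q s / P s)

open scoped Nat

section Aux
variable {𝒳 : Type*} [Fintype 𝒳] [DecidableEq 𝒳] {n : ℕ}


lemma factorial_mul_pow_le (m l : ℕ) : m ! * m ^ l ≤ l ! * m ^ m := by
  rcases le_total l m with h | h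
  · have key : ∀ k, l ≤ k → k ! ≤ l ! * k ^ (k - l) := by
      intro k hk
      induction k, hk using Nat.le_induction with
      | base => simp
      | succ k hk ih =>
        calc (k+1)! = (k+1) * k ! := rfl
          _ ≤ (k+1) * (l ! * k ^ (k - l)) := Nat.mul_le_mul_left _ ih
          _ ≤ (k+1) * (l ! * (k+1) ^ (k - l)) :=
              Nat.mul_le_mul_left _ (Nat.mul_le_mul_left _ (Nat.pow_le_pow_left (Nat.le_succ k) _))
          _ = l ! * ((k+1) ^ (k - l) * (k+1)) := by ring
          _ = l ! * (k+1) ^ (k + 1 - l) := by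
              rw [← pow_succ]; congr 2; omega
    calc m ! * m ^ l ≤ (l ! * m ^ (m - l)) * m ^ l :=
          Nat.mul_le_mul_right _ (key m h)
      _ = l ! * m ^ m := by rw [mul_assoc, ← pow_add]; congr 2; omega
  · have key : ∀ k, m ≤ k → m ^ (k - m) * m ! ≤ k ! := by
      intro k hk
      induction k, hk using Nat.le_induction with
      | base => simp
      | succ k hk ih =>
        have h1 : k + 1 - m = (k - m) + 1 := by omega
        calc m ^ (k + 1 - m) * m ! = m * (m ^ (k - m) * m !) := by rw [h1]; ring
          _ ≤ m * k ! := Nat.mul_le_mul_left _ ih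
          _ ≤ (k+1) * k ! := Nat.mul_le_mul_right _ (by omega)
          _ = (k+1)! := rfl
    calc m ! * m ^ l = (m ^ (l - m) * m !) * m ^ m := by
          rw [mul_comm (m ^ (l-m)) (m !), mul_assoc, ← pow_add]; congr 2; omega
      _ ≤ l ! * m ^ m := Nat.mul_le_mul_right _ (key l h)


lemma card_perm_fiber (x y : Fin n → 𝒳)
    (h : ∀ a, (univ.filter (fun t => x t = a)).card = (univ.filter (fun t => y t = a)).card) :
    Fintype.card {σ : Equiv.Perm (Fin n) // y ∘ ⇑σ = x}
      = ∏ a, ((univ.filter (fun t => x t = a)).card)! := by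
  have E : {σ : Equiv.Perm (Fin n) // y ∘ ⇑σ = x} ≃
      (∀ a, {t // x t = a} ≃ {t // y t = a}) :=
    { toFun := fun σ a =>
        { toFun := fun t => ⟨σ.1 t.1, (congrFun σ.2 t.1).trans t.2⟩
          invFun := fun s => ⟨σ.1.symm s.1, by
            have h1 := congrFun σ.2 (σ.1.symm s.1)
            rw [Function.comp_apply, Equiv.apply_symm_apply] at h1
            rw [← h1]; exact s.2⟩
          left_inv := fun t => Subtype.ext (σ.1.symm_apply_apply t.1)
          right_inv := fun s => Subtype.ext (σ.1.apply_symm_apply s.1) }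
      invFun := fun e => ⟨Equiv.ofFiberEquiv e, funext fun t => Equiv.ofFiberEquiv_map e t⟩
      left_inv := by
        intro σ
        apply Subtype.ext
        apply Equiv.ext
        intro t
        simp [Equiv.ofFiberEquiv, Equiv.sigmaFiberEquiv]
      right_inv := by
        intro e
        funext a
        apply Equiv.ext
        intro t
        apply Subtype.ext
        obtain ⟨t, rfl⟩ := t
        simp [Equiv.ofFiberEquiv, Equiv.sigmaFiberEquiv] }
  rw [Fintype.card_congr E, Fintype.card_pi]
  refine Finset.prod_congr rfl fun a _ => ?_
  have hxa : Fintype.card {t // x t = a} = (univ.filter (fun t => x t = a)).card :=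
    Fintype.card_subtype _
  have hya : Fintype.card {t // y t = a} = (univ.filter (fun t => y t = a)).card :=
    Fintype.card_subtype _
  rw [Fintype.card_equiv (Fintype.equivOfCardEq (by rw [hxa, hya, h a])), hxa]

lemma count_sum (x : Fin n → 𝒳) : ∑ a, (univ.filter (fun t => x t = a)).card = n := by
  have := Finset.card_eq_sum_card_fiberwise (f := x) (s := univ) (t := univ)
    (fun t _ => mem_univ (x t))
  simpa using this.symm

lemma card_typeclass (c : 𝒳 → ℕ) (x₀ : Fin n → 𝒳)
    (h₀ : ∀ a, (univ.filter (fun t => x₀ t = a)).card = c a) :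
    ((univ.filter (fun x : Fin n → 𝒳 =>
        ∀ a, (univ.filter (fun t => x t = a)).card = c a)).card) * ∏ a, (c a)! = n ! := by
  have hmaps : ∀ σ : Equiv.Perm (Fin n), σ ∈ (univ : Finset (Equiv.Perm (Fin n))) →
      x₀ ∘ ⇑σ ∈ univ.filter (fun x : Fin n → 𝒳 =>
        ∀ a, (univ.filter (fun t => x t = a)).card = c a) := by
    intro σ _
    simp only [mem_filter, mem_univ, true_and]
    intro a
    rw [← h₀ a]
    rw [← Fintype.card_subtype, ← Fintype.card_subtype]
    exact Fintype.card_congr (Equiv.subtypeEquiv σ (fun t => Iff.rfl))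
  have hfib := Finset.card_eq_sum_card_fiberwise hmaps
  rw [Finset.card_univ, Fintype.card_perm, Fintype.card_fin] at hfib
  rw [hfib]
  rw [Finset.sum_congr rfl (fun x hx => ?_), Finset.sum_const, smul_eq_mul]
  have hx' := (Finset.mem_filter.mp hx).2
  have := card_perm_fiber x x₀ (fun a => by rw [hx' a, h₀ a])
  rw [← Fintype.card_subtype, this]
  exact Finset.prod_congr rfl fun a _ => by rw [hx' a]

lemma exists_type (c : 𝒳 → ℕ) (hc : ∑ a, c a = n) :
    ∃ x₀ : Fin n → 𝒳, ∀ a, (univ.filter (fun t => x₀ t = a)).card = c a := by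
  have hcard : Fintype.card (Σ a : 𝒳, Fin (c a)) = Fintype.card (Fin n) := by
    simp [hc]
  let e : Fin n ≃ Σ a : 𝒳, Fin (c a) := (Fintype.equivOfCardEq hcard).symm
  refine ⟨fun t => (e t).1, fun a => ?_⟩
  rw [← Fintype.card_subtype]
  have e2 : {t : Fin n // (e t).1 = a} ≃ {s : Σ b : 𝒳, Fin (c b) // s.1 = a} :=
    Equiv.subtypeEquiv e (fun t => Iff.rfl)
  have e3 : {s : Σ b : 𝒳, Fin (c b) // s.1 = a} ≃ Fin (c a) :=
    { toFun := fun s => Fin.cast (congrArg c s.2) s.1.2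
      invFun := fun i => ⟨⟨a, i⟩, rfl⟩
      left_inv := by rintro ⟨⟨b, i⟩, rfl⟩; rfl
      right_inv := fun i => rfl }
  rw [Fintype.card_congr (e2.trans e3), Fintype.card_fin]


lemma prod_comp_count (x : Fin n → 𝒳) (g : 𝒳 → ℝ) :
    ∏ t, g (x t) = ∏ a, g a ^ (univ.filter (fun t => x t = a)).card := by
  rw [← Finset.prod_fiberwise_of_maps_to (fun t (_ : t ∈ univ) => Finset.mem_univ (x t))
      (fun t => g (x t))]
  refine Finset.prod_congr rfl fun a _ => ?_
  rw [Finset.prod_congr rfl (fun t ht => congrArg g (Finset.mem_filter.mp ht).2),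
    Finset.prod_const]

/-- the max lemma -/
lemma type_max (hn : 0 < n) (c d : 𝒳 → ℕ) (hc : ∑ a, c a = n) (hd : ∑ a, d a = n)
    (x₀ : Fin n → 𝒳) (h₀ : ∀ a, (univ.filter (fun t => x₀ t = a)).card = c a)
    (x₁ : Fin n → 𝒳) (h₁ : ∀ a, (univ.filter (fun t => x₁ t = a)).card = d a) :
    ((univ.filter (fun x : Fin n → 𝒳 =>
        ∀ a, (univ.filter (fun t => x t = a)).card = d a)).card : ℝ)
      * ∏ a, ((c a : ℝ) / n) ^ d a
    ≤ ((univ.filter (fun x : Fin n → 𝒳 =>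
        ∀ a, (univ.filter (fun t => x t = a)).card = c a)).card : ℝ)
      * ∏ a, ((c a : ℝ) / n) ^ c a := by
  set Nc := (univ.filter (fun x : Fin n → 𝒳 =>
        ∀ a, (univ.filter (fun t => x t = a)).card = c a)).card with hNc
  set Nd := (univ.filter (fun x : Fin n → 𝒳 =>
        ∀ a, (univ.filter (fun t => x t = a)).card = d a)).card with hNd
  have hnR : (0:ℝ) < n := Nat.cast_pos.mpr hn
  -- rewrite products
  have hprod : ∀ e : 𝒳 → ℕ, (∑ a, e a = n) →
      ∏ a, ((c a : ℝ) / n) ^ e a = (∏ a, (c a : ℝ) ^ e a) / (n : ℝ) ^ n := by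
    intro e he
    rw [← he, ← Finset.prod_pow_eq_pow_sum, ← Finset.prod_div_distrib]
    exact Finset.prod_congr rfl fun a _ => div_pow _ _ _
  rw [hprod d hd, hprod c hc]
  rw [← mul_div_assoc, ← mul_div_assoc, div_le_div_iff_of_pos_right (pow_pos hnR n)]
  have h2 := card_typeclass c x₀ h₀
  have h3 := card_typeclass d x₁ h₁
  have hK : 0 < (∏ a, (c a)!) * (∏ a, (d a)!) :=
    Nat.mul_pos (Finset.prod_pos fun a _ => (c a).factorial_pos)
      (Finset.prod_pos fun a _ => (d a).factorial_pos)
  have key : Nd * ∏ a, (c a) ^ (d a) ≤ Nc * ∏ a, (c a) ^ (c a) := by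
    apply Nat.le_of_mul_le_mul_right ?_ hK
    calc (Nd * ∏ a, (c a) ^ (d a)) * ((∏ a, (c a)!) * (∏ a, (d a)!))
        = (Nd * ∏ a, (d a)!) * (∏ a, ((c a)! * (c a) ^ (d a))) := by
          rw [Finset.prod_mul_distrib]; ring
      _ = n ! * ∏ a, ((c a)! * (c a) ^ (d a)) := by rw [h3]
      _ ≤ n ! * ∏ a, ((d a)! * (c a) ^ (c a)) :=
          Nat.mul_le_mul_left _ (Finset.prod_le_prod' fun a _ => factorial_mul_pow_le (c a) (d a))
      _ = (Nc * ∏ a, (c a)!) * ∏ a, ((d a)! * (c a) ^ (c a)) := by rw [h2]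
      _ = (Nc * ∏ a, (c a) ^ (c a)) * ((∏ a, (c a)!) * (∏ a, (d a)!)) := by
          rw [Finset.prod_mul_distrib]; ring
  exact_mod_cast key

theorem stmt7_aux (hn : 0 < n)
    (c : 𝒳 → ℕ) (hc : ∑ a, c a = n) :
    ((n + 1 : ℝ))⁻¹ ^ (Fintype.card 𝒳) *
        (2 : ℝ) ^ ((n : ℝ) * (-∑ a, ((c a : ℝ) / n) * Real.logb 2 ((c a : ℝ) / n)))
      ≤ ((Finset.univ.filter (fun x : Fin n → 𝒳 =>
            ∀ a, (Finset.univ.filter (fun t => x t = a)).card = c a)).card : ℝ)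
    ∧ ((Finset.univ.filter (fun x : Fin n → 𝒳 =>
            ∀ a, (Finset.univ.filter (fun t => x t = a)).card = c a)).card : ℝ)
      ≤ (2 : ℝ) ^ ((n : ℝ) * (-∑ a, ((c a : ℝ) / n) * Real.logb 2 ((c a : ℝ) / n))) := by
  have hnR : (0:ℝ) < n := Nat.cast_pos.mpr hn
  have hnne : (n:ℝ) ≠ 0 := hnR.ne'
  set Q : ℝ := ∏ a, ((c a : ℝ) / n) ^ c a with hQdef
  have hQpos : 0 < Q := by
    refine Finset.prod_pos fun a _ => ?_
    rcases Nat.eq_zero_or_pos (c a) with h | h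
    · simp [h]
    · exact pow_pos (div_pos (Nat.cast_pos.mpr h) hnR) _
  -- the 2-power equals Q⁻¹
  have hrpow_sum : ∀ (s : Finset 𝒳) (f : 𝒳 → ℝ),
      (2:ℝ) ^ (∑ a ∈ s, f a) = ∏ a ∈ s, (2:ℝ) ^ (f a) := by
    intro s f
    induction s using Finset.cons_induction with
    | empty => simp
    | cons a s ha ih => rw [Finset.sum_cons, Finset.prod_cons, Real.rpow_add two_pos, ih]
  have hE2 : (2 : ℝ) ^ ((n : ℝ) * (-∑ a, ((c a : ℝ) / n) * Real.logb 2 ((c a : ℝ) / n)))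
      = Q⁻¹ := by
    have hexp : (n : ℝ) * (-∑ a, ((c a : ℝ) / n) * Real.logb 2 ((c a : ℝ) / n))
        = ∑ a, (-(c a : ℝ)) * Real.logb 2 ((c a : ℝ) / n) := by
      rw [mul_neg, Finset.mul_sum, ← Finset.sum_neg_distrib]
      refine Finset.sum_congr rfl fun a _ => ?_
      rw [← mul_assoc, mul_div_cancel₀ _ hnne, neg_mul]
    rw [hexp, hrpow_sum, hQdef, ← Finset.prod_inv_distrib]
    refine Finset.prod_congr rfl fun a _ => ?_
    rcases Nat.eq_zero_or_pos (c a) with h | h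
    · simp [h]
    · have hq : (0:ℝ) < (c a : ℝ) / n := div_pos (Nat.cast_pos.mpr h) hnR
      rw [mul_comm, Real.rpow_mul (le_of_lt two_pos),
        Real.rpow_logb two_pos (by norm_num) hq,
        Real.rpow_neg hq.le, Real.rpow_natCast]
  rw [hE2]
  obtain ⟨x₀, h₀⟩ := exists_type c hc
  have hq1 : ∑ a, ((c a : ℝ) / n) = 1 := by
    rw [← Finset.sum_div]
    rw [show (∑ a, ((c a : ℝ))) = (n:ℝ) by exact_mod_cast congrArg (Nat.cast : ℕ → ℝ) hc]
    exact div_self hnne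
  have hsum1 : ∑ x : Fin n → 𝒳, ∏ t, ((c (x t) : ℝ) / n) = 1 := by
    rw [← Fintype.piFinset_univ, ← Finset.prod_univ_sum (fun _ => univ)
      (fun _ a => ((c a : ℝ) / n))]
    calc ∏ _t : Fin n, ∑ a, ((c a : ℝ) / n) = ∏ _t : Fin n, (1:ℝ) :=
          Finset.prod_congr rfl fun _ _ => hq1
      _ = 1 := Finset.prod_const_one
  set T := fun d : 𝒳 → ℕ => univ.filter (fun x : Fin n → 𝒳 =>
      ∀ a, (univ.filter (fun t => x t = a)).card = d a) with hT
  have hTQ : ∀ d : 𝒳 → ℕ, ∀ x ∈ T d, ∏ t, ((c (x t) : ℝ) / n) = ∏ a, ((c a : ℝ)/n) ^ d a := by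
    intro d x hx
    rw [prod_comp_count x (fun a => ((c a : ℝ) / n))]
    exact Finset.prod_congr rfl fun a _ => by rw [(Finset.mem_filter.mp hx).2 a]
  -- upper bound
  have hupper : ((T c).card : ℝ) * Q ≤ 1 := by
    rw [← hsum1]
    calc ((T c).card : ℝ) * Q = ∑ x ∈ T c, ∏ t, ((c (x t) : ℝ) / n) := by
          rw [Finset.sum_congr rfl (hTQ c), Finset.sum_const, nsmul_eq_mul, hQdef]
      _ ≤ ∑ x : Fin n → 𝒳, ∏ t, ((c (x t) : ℝ) / n) :=
          Finset.sum_le_sum_of_subset_of_nonneg (Finset.subset_univ _)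
            (fun x _ _ => Finset.prod_nonneg fun t _ =>
              div_nonneg (Nat.cast_nonneg _) hnR.le)
  -- lower bound
  have hmapsD : ∀ x : Fin n → 𝒳, x ∈ (univ : Finset (Fin n → 𝒳)) →
      (fun a => (univ.filter (fun t => x t = a)).card) ∈
        Fintype.piFinset (fun _ : 𝒳 => Finset.range (n+1)) := by
    intro x _
    rw [Fintype.mem_piFinset]
    intro a
    rw [Finset.mem_range]
    have h1 : (univ.filter (fun t => x t = a)).card ≤ n := by
      calc (univ.filter (fun t => x t = a)).card ≤ (univ : Finset (Fin n)).card :=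
            Finset.card_filter_le _ _
        _ = n := by simp
    omega
  have hfib := Finset.sum_fiberwise_of_maps_to hmapsD
    (fun x : Fin n → 𝒳 => ∏ t, ((c (x t) : ℝ) / n))
  have hlow : 1 ≤ ((n+1 : ℝ)) ^ (Fintype.card 𝒳) * (((T c).card : ℝ) * Q) := by
    have hbound : ∀ d ∈ Fintype.piFinset (fun _ : 𝒳 => Finset.range (n+1)),
        (∑ x ∈ univ.filter (fun x : Fin n → 𝒳 =>
            (fun a => (univ.filter (fun t => x t = a)).card) = d),
          ∏ t, ((c (x t) : ℝ) / n)) ≤ ((T c).card : ℝ) * Q := by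
      intro d _
      have hfe : univ.filter (fun x : Fin n → 𝒳 =>
          (fun a => (univ.filter (fun t => x t = a)).card) = d) = T d := by
        apply Finset.filter_congr
        intro x _
        exact funext_iff
      rw [hfe, Finset.sum_congr rfl (hTQ d), Finset.sum_const, nsmul_eq_mul]
      rcases Finset.eq_empty_or_nonempty (T d) with he | ⟨x₁, hx₁⟩
      · rw [he]
        simp only [Finset.card_empty, Nat.cast_zero, zero_mul]
        positivity
      · have h₁ : ∀ a, (univ.filter (fun t => x₁ t = a)).card = d a :=
          (Finset.mem_filter.mp hx₁).2
        have hd : ∑ a, d a = n := by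
          rw [← count_sum x₁]
          exact Finset.sum_congr rfl fun a _ => (h₁ a).symm
        exact type_max hn c d hc hd x₀ h₀ x₁ h₁
    calc (1:ℝ) = ∑ x : Fin n → 𝒳, ∏ t, ((c (x t) : ℝ) / n) := hsum1.symm
      _ = ∑ d ∈ Fintype.piFinset (fun _ : 𝒳 => Finset.range (n+1)),
          ∑ x ∈ univ.filter (fun x : Fin n → 𝒳 =>
            (fun a => (univ.filter (fun t => x t = a)).card) = d),
          ∏ t, ((c (x t) : ℝ) / n) := hfib.symm
      _ ≤ ∑ _d ∈ Fintype.piFinset (fun _ : 𝒳 => Finset.range (n+1)),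
            (((T c).card : ℝ) * Q) := Finset.sum_le_sum hbound
      _ = ((Fintype.piFinset (fun _ : 𝒳 => Finset.range (n+1))).card : ℝ)
            * (((T c).card : ℝ) * Q) := by rw [Finset.sum_const, nsmul_eq_mul]
      _ = ((n+1 : ℝ)) ^ (Fintype.card 𝒳) * (((T c).card : ℝ) * Q) := by
          congr 1
          rw [Fintype.card_piFinset]
          simp
  constructor
  · have hP : (0:ℝ) < ((n+1:ℝ)) ^ Fintype.card 𝒳 * Q := by positivity
    rw [inv_pow, ← mul_inv, inv_eq_one_div, div_le_iff₀ hP]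
    calc (1:ℝ) ≤ ((n+1 : ℝ)) ^ (Fintype.card 𝒳) * (((T c).card : ℝ) * Q) := hlow
      _ = ((T c).card : ℝ) * ((n+1:ℝ) ^ Fintype.card 𝒳 * Q) := by ring
  · rw [inv_eq_one_div, le_div_iff₀ hQpos]
    exact hupper

end Aux

/-- type class cardinality bounds:
(n+1)^{-|𝒳|} 2^{nH(P)} ≤ |T_P^n| ≤ 2^{nH(P)}. -/
theorem stmt7 {𝒳 : Type*} [Fintype 𝒳] [DecidableEq 𝒳] (n : ℕ) (hn : 0 < n)
    (c : 𝒳 → ℕ) (hc : ∑ a, c a = n) :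
    ((n + 1 : ℝ))⁻¹ ^ (Fintype.card 𝒳) *
        (2 : ℝ) ^ ((n : ℝ) * (-∑ a, ((c a : ℝ) / n) * Real.logb 2 ((c a : ℝ) / n)))
      ≤ ((Finset.univ.filter (fun x : Fin n → 𝒳 =>
            ∀ a, (Finset.univ.filter (fun t => x t = a)).card = c a)).card : ℝ)
    ∧ ((Finset.univ.filter (fun x : Fin n → 𝒳 =>
            ∀ a, (Finset.univ.filter (fun t => x t = a)).card = c a)).card : ℝ)
      ≤ (2 : ℝ) ^ ((n : ℝ) * (-∑ a, ((c a : ℝ) / n) * Real.logb 2 ((c a : ℝ) / n))) := stmt7_aux hn c hc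
end

section
/- Let P be a probability distribution on a finite set 𝒳 and Q ∈ 𝒫ₙ(𝒳) a type. Then Pⁿ(T_Q^n) ≤ 2^{-nD(Q‖P)}. -/
open Finset Real
open scoped Classical BigOperators

/-!
For a sequence `x` of type `c`, `Pⁿ(x) = ∏ₐ P(a)^{c a}` depends only on `c`. Comparing with the
empirical distribution `Q = c / n`, one has `Pⁿ(x) ≤ Qⁿ(x) · 2^{-n D(Q‖P)}` factor by factor (with
equality unless `P` vanishes somewhere on the support of `Q`), and summing over the type class
gives `Pⁿ(T) ≤ Qⁿ(T) · 2^{-n D(Q‖P)} ≤ 2^{-n D(Q‖P)}`.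
-/

lemma prod_comp_eq_prod_pow_card_fiber {𝒳 ι M : Type*} [Fintype 𝒳] [DecidableEq 𝒳] [Fintype ι]
    [CommMonoid M] (f : 𝒳 → M) (x : ι → 𝒳) :
    ∏ t, f (x t) = ∏ a, f a ^ (Finset.univ.filter (fun t => x t = a)).card := by
  simp_rw [← prod_const, prod_fiberwise' univ x f]

-- For `p = 0` this uses the junk values `q / 0 = 0` and `logb 2 0 = 0`.
lemma pow_le_pow_mul_two_rpow_neg_logb {p q : ℝ} (hp : 0 ≤ p) (hq : 0 < q) (k : ℕ) :
    p ^ k ≤ q ^ k * 2 ^ (-(k : ℝ) * logb 2 (q / p)) := by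
  rcases hp.eq_or_lt with rfl | hp
  · simpa using pow_le_pow_left₀ le_rfl hq.le k
  · have h : (2 : ℝ) ^ (-(k : ℝ) * logb 2 (q / p)) = (p / q) ^ k := by
      rw [← inv_div, logb_inv, neg_mul_neg, mul_comm, rpow_mul zero_le_two,
        rpow_logb two_pos one_lt_two.ne' (div_pos hp hq), rpow_natCast]
    rw [h, div_pow, mul_div_cancel₀ _ (pow_pos hq k).ne']

lemma prod_pow_le_prod_pow_mul_two_rpow {𝒳 : Type*} [Fintype 𝒳] {P Q : 𝒳 → ℝ}
    (hP : ∀ a, 0 ≤ P a) (c : 𝒳 → ℕ) (hQ : ∀ a, c a ≠ 0 → 0 < Q a) :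
    ∏ a, P a ^ c a ≤ (∏ a, Q a ^ c a) * 2 ^ (-∑ a, (c a : ℝ) * logb 2 (Q a / P a)) := by
  rw [← sum_neg_distrib, rpow_sum_of_pos two_pos, ← prod_mul_distrib]
  refine prod_le_prod (fun a _ => pow_nonneg (hP a) _) fun a _ => ?_
  rcases eq_or_ne (c a) 0 with hca | hca
  · simp [hca]
  · simpa only [neg_mul] using pow_le_pow_mul_two_rpow_neg_logb (hP a) (hQ a hca) (c a)

section TypeClass

variable {𝒳 ι : Type*} [Fintype 𝒳] [DecidableEq 𝒳] [Fintype ι] [DecidableEq ι]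

def typeClass (ι : Type*) [Fintype ι] [DecidableEq ι] (c : 𝒳 → ℕ) : Finset (ι → 𝒳) :=
  Finset.univ.filter (fun x : ι → 𝒳 => ∀ a, (Finset.univ.filter (fun t => x t = a)).card = c a)

lemma sum_typeClass_prod {R : Type*} [CommSemiring R] (f : 𝒳 → R) (c : 𝒳 → ℕ) :
    ∑ x ∈ typeClass ι c, ∏ t, f (x t) = #(typeClass ι c) * ∏ a, f a ^ c a := by
  rw [← nsmul_eq_mul, ← sum_const]
  refine sum_congr rfl fun x hx => ?_
  rw [prod_comp_eq_prod_pow_card_fiber]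
  exact prod_congr rfl fun a _ => by rw [(mem_filter.mp hx).2 a]

lemma sum_typeClass_prod_le_pow_sum {R : Type*} [CommSemiring R] [PartialOrder R]
    [IsOrderedRing R] {f : 𝒳 → R} (hf : ∀ a, 0 ≤ f a) (c : 𝒳 → ℕ) :
    ∑ x ∈ typeClass ι c, ∏ t, f (x t) ≤ (∑ a, f a) ^ Fintype.card ι :=
  calc ∑ x ∈ typeClass ι c, ∏ t, f (x t)
      ≤ ∑ x : ι → 𝒳, ∏ t, f (x t) :=
        sum_le_sum_of_subset_of_nonneg (subset_univ _) fun x _ _ => prod_nonneg fun t _ => hf (x t)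
    _ = (∑ a, f a) ^ Fintype.card ι := by rw [← Fintype.prod_sum, prod_const, card_univ]

lemma sum_typeClass_prod_le_mul_two_rpow {P Q : 𝒳 → ℝ} (hP : ∀ a, 0 ≤ P a) (c : 𝒳 → ℕ)
    (hQ : ∀ a, c a ≠ 0 → 0 < Q a) :
    ∑ x ∈ typeClass ι c, ∏ t, P (x t) ≤
      (∑ x ∈ typeClass ι c, ∏ t, Q (x t)) * 2 ^ (-∑ a, (c a : ℝ) * logb 2 (Q a / P a)) := by
  rw [sum_typeClass_prod, sum_typeClass_prod, mul_assoc]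
  gcongr
  exact prod_pow_le_prod_pow_mul_two_rpow hP c hQ

end TypeClass

section Empirical

variable {𝒳 : Type*} [Fintype 𝒳] {n : ℕ} {c : 𝒳 → ℕ}

lemma le_of_sum_eq (hc : ∑ a, c a = n) (a : 𝒳) : c a ≤ n :=
  hc ▸ single_le_sum (fun _ _ => Nat.zero_le _) (mem_univ a)

lemma div_pos_of_sum_eq (hc : ∑ a, c a = n) {a : 𝒳} (ha : c a ≠ 0) : 0 < (c a : ℝ) / n := by
  have hca : 0 < c a := Nat.pos_of_ne_zero ha
  exact div_pos (Nat.cast_pos.mpr hca) (Nat.cast_pos.mpr (hca.trans_le (le_of_sum_eq hc a)))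

lemma natCast_mul_div_of_sum_eq (hc : ∑ a, c a = n) (a : 𝒳) :
    (n : ℝ) * ((c a : ℝ) / n) = c a :=
  mul_div_cancel_of_imp' fun hn => by
    exact_mod_cast Nat.eq_zero_of_le_zero (Nat.cast_eq_zero.mp hn ▸ le_of_sum_eq hc a)

lemma sum_div_pow_eq_one_of_sum_eq (hc : ∑ a, c a = n) : (∑ a, (c a : ℝ) / n) ^ n = 1 := by
  rw [← sum_div, ← Nat.cast_sum, hc]
  rcases eq_or_ne n 0 with rfl | hn
  · exact pow_zero _
  · rw [div_self (Nat.cast_ne_zero.mpr hn), one_pow]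

end Empirical

theorem stmt9_general {𝒳 : Type*} [Fintype 𝒳] [DecidableEq 𝒳] (n : ℕ)
    (P : 𝒳 → ℝ) (hP : (∀ a, 0 ≤ P a) ∧ ∑ a, P a = 1)
    (c : 𝒳 → ℕ) (hc : ∑ a, c a = n) :
    ∑ x ∈ Finset.univ.filter (fun x : Fin n → 𝒳 =>
        ∀ a, (Finset.univ.filter (fun t => x t = a)).card = c a), ∏ t, P (x t)
      ≤ (2 : ℝ) ^ (-(n : ℝ) *
          ∑ a, ((c a : ℝ) / n) * Real.logb 2 (((c a : ℝ) / n) / P a)) := by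
  set Q : 𝒳 → ℝ := fun a => (c a : ℝ) / n
  have hexponent : -(n : ℝ) * ∑ a, Q a * logb 2 (Q a / P a) =
      -∑ a, (c a : ℝ) * logb 2 (Q a / P a) := by
    simp only [mul_sum, neg_mul, ← mul_assoc, natCast_mul_div_of_sum_eq hc, sum_neg_distrib, Q]
  have hmass : ∑ x ∈ typeClass (Fin n) c, ∏ t, Q (x t) ≤ 1 := by
    refine (sum_typeClass_prod_le_pow_sum (fun a => by positivity) c).trans_eq ?_
    rw [Fintype.card_fin]
    exact sum_div_pow_eq_one_of_sum_eq hc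
  change ∑ x ∈ typeClass (Fin n) c, ∏ t, P (x t) ≤ _
  calc ∑ x ∈ typeClass (Fin n) c, ∏ t, P (x t)
      ≤ (∑ x ∈ typeClass (Fin n) c, ∏ t, Q (x t)) * 2 ^ (-∑ a, (c a : ℝ) * logb 2 (Q a / P a)) :=
        sum_typeClass_prod_le_mul_two_rpow hP.1 c fun a => div_pos_of_sum_eq hc
    _ ≤ 2 ^ (-(n : ℝ) * ∑ a, Q a * logb 2 (Q a / P a)) := by
        rw [hexponent]
        exact mul_le_of_le_one_left (by positivity) hmass

/-- Pⁿ(T_Q^n) ≤ 2^{-n D(Q‖P)}. -/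
theorem stmt9 {𝒳 : Type*} [Fintype 𝒳] [DecidableEq 𝒳] (n : ℕ) (hn : 0 < n)
    (P : 𝒳 → ℝ) (hP : (∀ a, 0 ≤ P a) ∧ ∑ a, P a = 1)
    (c : 𝒳 → ℕ) (hc : ∑ a, c a = n) :
    ∑ x ∈ Finset.univ.filter (fun x : Fin n → 𝒳 =>
        ∀ a, (Finset.univ.filter (fun t => x t = a)).card = c a), ∏ t, P (x t)
      ≤ (2 : ℝ) ^ (-(n : ℝ) *
          ∑ a, ((c a : ℝ) / n) * Real.logb 2 (((c a : ℝ) / n) / P a)) :=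
  stmt9_general n P hP c hc
end

section
/- For any positive real numbers u and v, u·log₂(u/v) ≤ (log₂ e)·(u − v + (u − v)²/v). -/
open Finset Real
open scoped Classical BigOperators

/-- u·log₂(u/v) ≤ (log₂ e)·(u − v + (u − v)²/v) for u, v > 0. -/
theorem stmt12 (u v : ℝ) (hu : 0 < u) (hv : 0 < v) :
    u * Real.logb 2 (u / v)
      ≤ Real.logb 2 (Real.exp 1) * (u - v + (u - v) ^ 2 / v) := by
  have h2 : (0:ℝ) < Real.log 2 := Real.log_pos (by norm_num)
  have hlog : Real.log (u / v) ≤ (u - v) / v := by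
    have h := Real.log_le_sub_one_of_pos (div_pos hu hv)
    have : (u - v) / v = u / v - 1 := by field_simp
    linarith
  have key : u * Real.log (u / v) ≤ u - v + (u - v) ^ 2 / v := by
    have h1 : u * Real.log (u / v) ≤ u * ((u - v) / v) :=
      mul_le_mul_of_nonneg_left hlog hu.le
    have h2' : u * ((u - v) / v) = u - v + (u - v) ^ 2 / v := by
      field_simp; ring
    linarith
  rw [Real.logb, Real.logb, Real.log_exp]
  rw [mul_div_assoc', div_le_iff₀ h2, one_div, inv_mul_eq_div, div_mul_eq_mul_div,
    mul_div_cancel_right₀ _ h2.ne']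
  exact key
end

section
/- Let (X₁,X₂) be a pair of random variables on a finite set and let P* = max_{(x₁,x₂)} P(x₁,x₂). For any random variable C jointly distributed with (X₁,X₂), any estimator ψ from the range of C, and any ν > 0, the probability Pr[ψ(C) = (X₁,X₂)] ≤ 2^ν · P* + (1/ν)·I(C; X₁,X₂). -/
/-!
Change of measure against the product of the marginals. Writing `Q` for the joint law of `(C, Z)`
and `R` for the product of its marginals, the tangent-line bound `log x ≤ x - 1` gives, for every
`f`, `∑ Q f ≤ ln 2 · KL(Q ‖ R) + ∑ R e^f - 1`, and `KL(Q ‖ R) = I(C; Z)`. Take `f = ν ln 2` on the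
graph of `ψ` and `0` off it: the left side becomes `ν ln 2 · Pr[ψ(C) = Z]`, while under `R` the
variable `Z` is independent of `C`, so `∑ R e^f = 1 + (2^ν - 1) ∑_c Pr[C = c] Pr[Z = ψ c]`, which
is at most `1 + ν ln 2 · 2^ν · P*`.
-/

open Finset Real
open scoped Classical BigOperators

lemma mul_le_mul_log_div_add_mul_exp_sub {q r : ℝ} (hq : 0 ≤ q) (hr : 0 ≤ r)
    (hqr : r = 0 → q = 0) (u : ℝ) : q * u ≤ q * log (q / r) + r * exp u - q := by
  rcases hq.eq_or_lt with rfl | hq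
  · simp only [zero_mul, zero_div, log_zero, sub_zero, zero_add]
    positivity
  have hr : 0 < r := hr.lt_of_ne fun h => hq.ne' (hqr h.symm)
  have htangent := log_le_sub_one_of_pos (x := r * exp u / q) (by positivity)
  rw [log_div (by positivity) hq.ne', log_mul hr.ne' (exp_ne_zero u), log_exp] at htangent
  rw [log_div hq.ne' hr.ne']
  have := mul_le_mul_of_nonneg_left htangent hq.le
  rw [mul_sub (b := r * exp u / q), mul_div_cancel₀ _ hq.ne'] at this
  linarith

lemma exp_sub_one_le_mul_exp (u : ℝ) : exp u - 1 ≤ u * exp u := by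
  have h := mul_le_mul_of_nonneg_left (add_one_le_exp (-u)) (exp_pos u).le
  rw [← exp_add, add_neg_cancel, exp_zero] at h
  linarith

theorem sum_mul_le_log_two_mul_KL_add {S : Type*} [Fintype S] {Q R : S → ℝ}
    (hQ : ∀ s, 0 ≤ Q s) (hR : ∀ s, 0 ≤ R s) (hQR : ∀ s, R s = 0 → Q s = 0) (f : S → ℝ) :
    ∑ s, Q s * f s ≤ log 2 * KL Q R + ∑ s, R s * exp (f s) - ∑ s, Q s := by
  have hKL : log 2 * KL Q R = ∑ s, Q s * log (Q s / R s) := by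
    rw [KL, mul_sum]
    refine sum_congr rfl fun s _ => ?_
    rw [logb]
    field_simp
  rw [hKL, ← sum_add_distrib, ← sum_sub_distrib]
  exact sum_le_sum fun s _ => mul_le_mul_log_div_add_mul_exp_sub (hQ s) (hR s) (hQR s) (f s)

section Law

variable {Ω α β : Type*} [Fintype Ω]

noncomputable def law (p : Ω → ℝ) (X : Ω → α) (a : α) : ℝ :=
  pr p (fun ω => X ω = a)

lemma law_nonneg {p : Ω → ℝ} (hp : ∀ ω, 0 ≤ p ω) (X : Ω → α) (a : α) : 0 ≤ law p X a :=
  sum_nonneg fun ω _ => by split_ifs <;> simp [hp ω]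

lemma law_mono {p : Ω → ℝ} (hp : ∀ ω, 0 ≤ p ω) {X : Ω → α} {Y : Ω → β} {a : α} {b : β}
    (h : ∀ ω, X ω = a → Y ω = b) : law p X a ≤ law p Y b :=
  sum_le_sum fun ω _ => by
    by_cases hX : X ω = a
    · simp [hX, h ω hX]
    · simp only [hX, if_false]
      split_ifs <;> simp [hp ω]

lemma law_pair_le_fst {p : Ω → ℝ} (hp : ∀ ω, 0 ≤ p ω) (X : Ω → α) (Y : Ω → β) (ab : α × β) :
    law p (fun ω => (X ω, Y ω)) ab ≤ law p X ab.1 :=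
  law_mono hp fun _ h => congrArg Prod.fst h

lemma law_pair_le_snd {p : Ω → ℝ} (hp : ∀ ω, 0 ≤ p ω) (X : Ω → α) (Y : Ω → β) (ab : α × β) :
    law p (fun ω => (X ω, Y ω)) ab ≤ law p Y ab.2 :=
  law_mono hp fun _ h => congrArg Prod.snd h

lemma sum_law_mul [Fintype α] (p : Ω → ℝ) (X : Ω → α) (g : α → ℝ) :
    ∑ a, law p X a * g a = ∑ ω, p ω * g (X ω) := by
  simp only [law, pr, sum_mul, ite_mul, zero_mul]
  rw [sum_comm]
  simp

lemma sum_law [Fintype α] {p : Ω → ℝ} (hp : IsPMF p) (X : Ω → α) : ∑ a, law p X a = 1 := by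
  simpa [hp.2] using sum_law_mul p X fun _ => 1

lemma sum_law_pair_mul_fst [Fintype α] [Fintype β] (p : Ω → ℝ) (X : Ω → α) (Y : Ω → β)
    (g : α → ℝ) :
    ∑ ab, law p (fun ω => (X ω, Y ω)) ab * g ab.1 = ∑ a, law p X a * g a :=
  (sum_law_mul p _ fun ab : α × β => g ab.1).trans (sum_law_mul p X g).symm

lemma sum_law_pair_mul_snd [Fintype α] [Fintype β] (p : Ω → ℝ) (X : Ω → α) (Y : Ω → β)
    (g : β → ℝ) :
    ∑ ab, law p (fun ω => (X ω, Y ω)) ab * g ab.2 = ∑ b, law p Y b * g b :=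
  (sum_law_mul p _ fun ab : α × β => g ab.2).trans (sum_law_mul p Y g).symm

theorem MI_eq_KL [Fintype α] [Fintype β] {p : Ω → ℝ} (hp : ∀ ω, 0 ≤ p ω)
    (X : Ω → α) (Y : Ω → β) :
    MI p X Y = KL (law p fun ω => (X ω, Y ω)) fun ab => law p X ab.1 * law p Y ab.2 := by
  have hexpand : ∀ ab, law p (fun ω => (X ω, Y ω)) ab *
        logb 2 (law p (fun ω => (X ω, Y ω)) ab / (law p X ab.1 * law p Y ab.2))
      = law p (fun ω => (X ω, Y ω)) ab * logb 2 (law p (fun ω => (X ω, Y ω)) ab)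
        - law p (fun ω => (X ω, Y ω)) ab * logb 2 (law p X ab.1)
        - law p (fun ω => (X ω, Y ω)) ab * logb 2 (law p Y ab.2) := by
    intro ab
    rcases (law_nonneg hp _ ab).eq_or_lt with hQ | hQ
    · rw [← hQ]; simp
    have hX := hQ.trans_le (law_pair_le_fst hp X Y ab)
    have hY := hQ.trans_le (law_pair_le_snd hp X Y ab)
    rw [logb_div hQ.ne' (by positivity), logb_mul hX.ne' hY.ne']
    ring
  rw [KL, sum_congr rfl fun ab _ => hexpand ab, sum_sub_distrib, sum_sub_distrib,
    sum_law_pair_mul_fst p X Y fun a => logb 2 (law p X a),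
    sum_law_pair_mul_snd p X Y fun b => logb 2 (law p Y b), MI, Hent, Hent, Hent]
  simp only [law]
  ring

end Law

lemma sum_mul_exp_ite_le {δ : Type*} [Fintype δ] {w : δ → ℝ} (hw : ∀ z, 0 ≤ w z)
    (hw1 : ∑ z, w z = 1) (d : δ) {u P : ℝ} (hu : 0 ≤ u) (hP : w d ≤ P) :
    ∑ z, w z * exp (if z = d then u else 0) ≤ 1 + u * exp u * P := by
  have hsplit : ∀ z, w z * exp (if z = d then u else 0)
      = w z + if z = d then (exp u - 1) * w z else 0 := by
    intro z
    split_ifs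
    · ring
    · simp
  calc ∑ z, w z * exp (if z = d then u else 0) = 1 + (exp u - 1) * w d := by
        rw [sum_congr rfl fun z _ => hsplit z, sum_add_distrib, hw1, sum_ite_eq']
        simp
    _ ≤ 1 + u * exp u * w d := by
        gcongr
        · exact hw d
        · exact exp_sub_one_le_mul_exp u
    _ ≤ 1 + u * exp u * P := by gcongr

theorem pr_comp_eq_le_two_rpow_mul_add_MI {Ω γ δ : Type*} [Fintype Ω] [Fintype γ] [Fintype δ]
    {p : Ω → ℝ} (hp : IsPMF p) (C : Ω → γ) (Z : Ω → δ) (ψ : γ → δ) {ν P : ℝ} (hν : 0 < ν)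
    (hP : ∀ z, law p Z z ≤ P) :
    pr p (fun ω => ψ (C ω) = Z ω) ≤ 2 ^ ν * P + 1 / ν * MI p C Z := by
  set u := ν * log 2
  have hu : 0 < u := mul_pos hν (log_pos one_lt_two)
  set Q := law p fun ω => (C ω, Z ω)
  set R := fun cz : γ × δ => law p C cz.1 * law p Z cz.2
  set f := fun cz : γ × δ => if cz.2 = ψ cz.1 then u else 0
  have hQR : ∀ cz, R cz = 0 → Q cz = 0 := fun cz hR =>
    (mul_eq_zero.mp hR).elim
      (fun h => le_antisymm (h ▸ law_pair_le_fst hp.1 C Z cz) (law_nonneg hp.1 _ cz))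
      (fun h => le_antisymm (h ▸ law_pair_le_snd hp.1 C Z cz) (law_nonneg hp.1 _ cz))
  have hvar := sum_mul_le_log_two_mul_KL_add (law_nonneg hp.1 _)
    (fun cz => mul_nonneg (law_nonneg hp.1 C cz.1) (law_nonneg hp.1 Z cz.2)) hQR f
  have hsuccess : ∑ cz, Q cz * f cz = u * pr p (fun ω => ψ (C ω) = Z ω) := by
    rw [sum_law_mul, pr, mul_sum]
    simp [f, eq_comm, mul_comm]
  have htilt : ∑ cz, R cz * exp (f cz) ≤ 1 + u * exp u * P := by
    calc ∑ cz, R cz * exp (f cz)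
        = ∑ c, law p C c * ∑ z, law p Z z * exp (if z = ψ c then u else 0) := by
          simp only [Fintype.sum_prod_type, R, f, mul_assoc, mul_sum]
      _ ≤ ∑ c, law p C c * (1 + u * exp u * P) := sum_le_sum fun c _ =>
          mul_le_mul_of_nonneg_left
            (sum_mul_exp_ite_le (law_nonneg hp.1 Z) (sum_law hp Z) _ hu.le (hP _))
            (law_nonneg hp.1 C c)
      _ = 1 + u * exp u * P := by rw [← sum_mul, sum_law hp, one_mul]
  rw [← MI_eq_KL hp.1, sum_law hp, hsuccess] at hvar
  have h2 : (2 : ℝ) ^ ν = exp u := by rw [rpow_def_of_pos two_pos, mul_comm]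
  have hMI : u * (1 / ν * MI p C Z) = log 2 * MI p C Z := by
    field_simp [u]
    ring
  refine le_of_mul_le_mul_left ?_ hu
  rw [h2, mul_add, hMI]
  linarith

/-- Pr[ψ(C) = (X₁,X₂)] ≤ 2^ν · P* + (1/ν)·I(C; X₁,X₂). -/
theorem stmt15 {Ω α β γ : Type*} [Fintype Ω] [Fintype α] [Fintype β] [Fintype γ]
    [Nonempty α] [Nonempty β]
    (p : Ω → ℝ) (hp : IsPMF p) (X₁ : Ω → α) (X₂ : Ω → β) (C : Ω → γ)
    (ψ : γ → α × β) (ν : ℝ) (hν : 0 < ν) :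
    pr p (fun ω => ψ (C ω) = (X₁ ω, X₂ ω))
      ≤ (2 : ℝ) ^ ν *
          (Finset.univ.sup' Finset.univ_nonempty
            (fun ab : α × β => pr p (fun ω => (X₁ ω, X₂ ω) = ab)))
        + (1 / ν) * MI p C (fun ω => (X₁ ω, X₂ ω)) :=
  pr_comp_eq_le_two_rpow_mul_add_MI hp C _ ψ hν fun ab => le_sup' _ (mem_univ ab)
end

section
/- With the setup of the random affine map k ↦ kA ⊕ b over finite field 𝒳 and a fixed nonempty set T ⊆ 𝒳ⁿ, define Ω(u) = (1/|T|)·|{k ∈ T : kA⊕b = u}|. Then for each u ∈ 𝒳ᵐ, Var[Ω(u)] ≤ |𝒳|^{-2m} · (|𝒳|^m / |T|). -/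
open Finset Real
open scoped Classical BigOperators

section aux
variable {𝒳 : Type*} [Field 𝒳] [Fintype 𝒳] [DecidableEq 𝒳] {n m : ℕ}

lemma ker_card (d : Fin n → 𝒳) (hd : d ≠ 0) :
    (Finset.univ.filter (fun A : Matrix (Fin n) (Fin m) 𝒳 => Matrix.vecMul d A = 0)).card
      * Fintype.card (Fin m → 𝒳) = Fintype.card (Matrix (Fin n) (Fin m) 𝒳) := by
  obtain ⟨i0, hi0⟩ : ∃ i, d i ≠ 0 := by
    by_contra h; push_neg at h; exact hd (funext h)
  set φ : Matrix (Fin n) (Fin m) 𝒳 →+ (Fin m → 𝒳) :=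
    AddMonoidHom.mk' (fun A => Matrix.vecMul d A) (fun A B => Matrix.vecMul_add A B d)
  have hsurj : Function.Surjective φ := by
    intro v
    refine ⟨Matrix.of (fun i j => if i = i0 then (d i0)⁻¹ * v j else 0), ?_⟩
    funext j
    simp only [φ, AddMonoidHom.mk'_apply, Matrix.vecMul, dotProduct, Matrix.of_apply,
      mul_ite, mul_zero]
    rw [Finset.sum_ite_eq' Finset.univ i0 (fun i => d i * ((d i0)⁻¹ * v j))]
    rw [if_pos (Finset.mem_univ i0)]
    field_simp
  have h1 : Nat.card (Matrix (Fin n) (Fin m) 𝒳)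
      = Nat.card (Matrix (Fin n) (Fin m) 𝒳 ⧸ φ.ker) * Nat.card φ.ker :=
    AddSubgroup.card_eq_card_quotient_mul_card_addSubgroup φ.ker
  have h2 : Nat.card (Matrix (Fin n) (Fin m) 𝒳 ⧸ φ.ker) = Nat.card (Fin m → 𝒳) :=
    Nat.card_congr (QuotientAddGroup.quotientKerEquivOfSurjective φ hsurj).toEquiv
  have h3 : Nat.card φ.ker
      = (Finset.univ.filter (fun A : Matrix (Fin n) (Fin m) 𝒳 => Matrix.vecMul d A = 0)).card := by
    rw [Nat.card_eq_fintype_card]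
    rw [← Fintype.card_subtype]
    apply Fintype.card_congr
    apply Equiv.subtypeEquivRight
    intro A
    simp [φ, AddMonoidHom.mem_ker]
  rw [h2, h3] at h1
  simp only [Nat.card_eq_fintype_card] at h1
  rw [mul_comm]
  exact h1.symm

end aux

section aux2
variable {𝒳 : Type*} [Field 𝒳] [Fintype 𝒳] [DecidableEq 𝒳] {n m : ℕ}

lemma sum_single (s : Fin n → 𝒳) (u : Fin m → 𝒳) :
    ∑ Ab : Matrix (Fin n) (Fin m) 𝒳 × (Fin m → 𝒳),
      (if Matrix.vecMul s Ab.1 + Ab.2 = u then (1:ℝ) else 0)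
    = (Fintype.card (Matrix (Fin n) (Fin m) 𝒳) : ℝ) := by
  rw [Fintype.sum_prod_type]
  have h : ∀ A : Matrix (Fin n) (Fin m) 𝒳,
      (∑ b : Fin m → 𝒳, if Matrix.vecMul s A + b = u then (1:ℝ) else 0) = 1 := by
    intro A
    have : ∀ b : Fin m → 𝒳, (Matrix.vecMul s A + b = u) ↔ (b = u - Matrix.vecMul s A) := by
      intro b
      constructor
      · intro h; rw [← h]; abel
      · intro h; rw [h]; abel
    simp_rw [this]
    rw [Finset.sum_ite_eq' Finset.univ (u - Matrix.vecMul s A) (fun _ => (1:ℝ))]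
    simp
  simp_rw [h]
  simp

lemma sum_pair (s t : Fin n → 𝒳) (hst : s ≠ t) (u : Fin m → 𝒳) :
    (∑ Ab : Matrix (Fin n) (Fin m) 𝒳 × (Fin m → 𝒳),
      (if Matrix.vecMul s Ab.1 + Ab.2 = u then (1:ℝ) else 0) *
      (if Matrix.vecMul t Ab.1 + Ab.2 = u then (1:ℝ) else 0))
      * (Fintype.card (Fin m → 𝒳) : ℝ)
    = (Fintype.card (Matrix (Fin n) (Fin m) 𝒳) : ℝ) := by
  have hcond : ∀ (A : Matrix (Fin n) (Fin m) 𝒳) (b : Fin m → 𝒳),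
      ((Matrix.vecMul s A + b = u) ∧ (Matrix.vecMul t A + b = u))
        ↔ (Matrix.vecMul (s - t) A = 0 ∧ b = u - Matrix.vecMul s A) := by
    intro A b
    rw [Matrix.sub_vecMul, sub_eq_zero]
    constructor
    · rintro ⟨h1, h2⟩
      constructor
      · rw [← h1] at h2; exact (add_right_cancel h2).symm
      · rw [← h1]; abel
    · rintro ⟨h1, h2⟩
      refine ⟨by rw [h2]; abel, by rw [h2, ← h1]; abel⟩
  have hprod : ∀ Ab : Matrix (Fin n) (Fin m) 𝒳 × (Fin m → 𝒳),
      (if Matrix.vecMul s Ab.1 + Ab.2 = u then (1:ℝ) else 0) *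
      (if Matrix.vecMul t Ab.1 + Ab.2 = u then (1:ℝ) else 0)
      = (if Matrix.vecMul (s - t) Ab.1 = 0 then (1:ℝ) else 0) *
        (if Ab.2 = u - Matrix.vecMul s Ab.1 then (1:ℝ) else 0) := by
    intro Ab
    rw [ite_zero_mul_ite_zero, ite_zero_mul_ite_zero, one_mul]
    exact if_congr (hcond Ab.1 Ab.2) rfl rfl
  simp_rw [hprod]
  rw [Fintype.sum_prod_type]
  have h2 : ∀ A : Matrix (Fin n) (Fin m) 𝒳,
      (∑ b : Fin m → 𝒳, (if Matrix.vecMul (s - t) A = 0 then (1:ℝ) else 0) *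
        (if b = u - Matrix.vecMul s A then (1:ℝ) else 0))
      = (if Matrix.vecMul (s - t) A = 0 then (1:ℝ) else 0) := by
    intro A
    rw [← Finset.mul_sum,
      Finset.sum_ite_eq' Finset.univ (u - Matrix.vecMul s A) (fun _ => (1:ℝ))]
    simp
  simp_rw [h2]
  rw [Finset.sum_boole]
  rw [← Nat.cast_mul]
  rw [ker_card (s - t) (sub_ne_zero.mpr hst)]

end aux2


/-- Var[Ω(u)] ≤ |𝒳|^{-2m} · (|𝒳|^m / |T|). -/
theorem stmt17 {𝒳 : Type*} [Field 𝒳] [Fintype 𝒳] [DecidableEq 𝒳] {n m : ℕ}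
    (T : Finset (Fin n → 𝒳)) (hT : T.Nonempty) (u : Fin m → 𝒳)
    (f : Matrix (Fin n) (Fin m) 𝒳 × (Fin m → 𝒳) → ℝ)
    (hf : ∀ Ab, f Ab = (T.card : ℝ)⁻¹ *
      ((T.filter (fun k => Matrix.vecMul k Ab.1 + Ab.2 = u)).card : ℝ))
    (w : ℝ)
    (hw : w = ((Fintype.card (Matrix (Fin n) (Fin m) 𝒳 × (Fin m → 𝒳)) : ℝ))⁻¹)
    (μ : ℝ) (hμ : μ = ∑ Ab, w * f Ab) :
    ∑ Ab, w * (f Ab - μ) ^ 2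
      ≤ ((Fintype.card 𝒳 : ℝ) ^ (2 * m))⁻¹ * ((Fintype.card 𝒳 : ℝ) ^ m / T.card) := by
  classical
  set g : (Fin n → 𝒳) → Matrix (Fin n) (Fin m) 𝒳 × (Fin m → 𝒳) → ℝ :=
    fun k Ab => if Matrix.vecMul k Ab.1 + Ab.2 = u then (1:ℝ) else 0 with hg
  set c : ℝ := (T.card : ℝ) with hcdef
  have hc : (0:ℝ) < c := by rw [hcdef]; exact_mod_cast hT.card_pos
  set K : ℝ := (Fintype.card (Matrix (Fin n) (Fin m) 𝒳) : ℝ) with hKdef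
  set V : ℝ := (Fintype.card (Fin m → 𝒳) : ℝ) with hVdef
  have hKpos : (0:ℝ) < K := by
    rw [hKdef]; exact_mod_cast Fintype.card_pos (α := Matrix (Fin n) (Fin m) 𝒳)
  have hVpos : (0:ℝ) < V := by
    rw [hVdef]; exact_mod_cast Fintype.card_pos (α := Fin m → 𝒳)
  have hVX : V = (Fintype.card 𝒳 : ℝ) ^ m := by
    rw [hVdef, Fintype.card_fun, Fintype.card_fin]; push_cast; ring
  have hw' : w = (K * V)⁻¹ := by
    rw [hw, Fintype.card_prod]; push_cast; ring
  -- f as sum of indicators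
  have hfg : ∀ Ab, f Ab = c⁻¹ * ∑ k ∈ T, g k Ab := by
    intro Ab
    rw [hf]
    congr 1
    rw [Finset.sum_boole]
  -- first moment sums
  have hsum1 : ∀ s : Fin n → 𝒳, (∑ Ab : Matrix (Fin n) (Fin m) 𝒳 × (Fin m → 𝒳), g s Ab) = K :=
    fun s => sum_single s u
  have hsum2 : ∀ s t : Fin n → 𝒳, s ≠ t →
      (∑ Ab : Matrix (Fin n) (Fin m) 𝒳 × (Fin m → 𝒳), g s Ab * g t Ab) = K / V := by
    intro s t hst
    have := sum_pair s t hst u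
    field_simp
    exact this
  have hgsq : ∀ (s : Fin n → 𝒳) Ab, g s Ab * g s Ab = g s Ab := by
    intro s Ab
    by_cases h : Matrix.vecMul s Ab.1 + Ab.2 = u <;> simp [hg, h]
  -- mean
  have hμ' : μ = w * K := by
    rw [hμ]
    have h1 : (∑ Ab, w * f Ab)
        = ∑ Ab : Matrix (Fin n) (Fin m) 𝒳 × (Fin m → 𝒳), ∑ k ∈ T, w * c⁻¹ * g k Ab := by
      apply Finset.sum_congr rfl
      intro Ab _
      rw [hfg, Finset.mul_sum, Finset.mul_sum]
      exact Finset.sum_congr rfl fun k _ => by ring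
    rw [h1, Finset.sum_comm]
    have h2 : ∀ k ∈ T, (∑ Ab : Matrix (Fin n) (Fin m) 𝒳 × (Fin m → 𝒳), w * c⁻¹ * g k Ab)
        = w * c⁻¹ * K := by
      intro k _
      rw [← Finset.mul_sum, hsum1]
    rw [Finset.sum_congr rfl h2, Finset.sum_const, nsmul_eq_mul, ← hcdef]
    field_simp
  -- second moment
  have hM2 : (∑ Ab : Matrix (Fin n) (Fin m) 𝒳 × (Fin m → 𝒳), w * f Ab ^ 2)
      = w * c⁻¹ * c⁻¹ * (c * K + c * (c - 1) * (K / V)) := by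
    have h1 : ∀ Ab, w * f Ab ^ 2 = ∑ s ∈ T, ∑ t ∈ T, w * c⁻¹ * c⁻¹ * (g s Ab * g t Ab) := by
      intro Ab
      rw [hfg]
      rw [show (w * (c⁻¹ * ∑ k ∈ T, g k Ab) ^ 2)
        = w * c⁻¹ * c⁻¹ * ((∑ s ∈ T, g s Ab) * (∑ t ∈ T, g t Ab)) by ring]
      rw [Finset.sum_mul_sum, Finset.mul_sum]
      exact Finset.sum_congr rfl fun s _ => by rw [Finset.mul_sum]
    simp_rw [h1]
    rw [Finset.sum_comm]
    have h2 : ∀ s ∈ T, (∑ Ab : Matrix (Fin n) (Fin m) 𝒳 × (Fin m → 𝒳),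
        ∑ t ∈ T, w * c⁻¹ * c⁻¹ * (g s Ab * g t Ab))
        = w * c⁻¹ * c⁻¹ * (K + (c - 1) * (K / V)) := by
      intro s hs
      rw [Finset.sum_comm]
      have h3 : ∀ t ∈ T, (∑ Ab : Matrix (Fin n) (Fin m) 𝒳 × (Fin m → 𝒳),
          w * c⁻¹ * c⁻¹ * (g s Ab * g t Ab))
          = w * c⁻¹ * c⁻¹ * (if t = s then K else K / V) := by
        intro t _
        rw [← Finset.mul_sum]
        by_cases h : t = s
        · subst h
          simp_rw [hgsq]
          rw [hsum1]
          simp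
        · rw [hsum2 s t (fun hh => h hh.symm), if_neg h]
      rw [Finset.sum_congr rfl h3]
      rw [← Finset.add_sum_erase _ _ hs]
      rw [if_pos rfl]
      have h4 : ∀ t ∈ T.erase s,
          w * c⁻¹ * c⁻¹ * (if t = s then K else K / V) = w * c⁻¹ * c⁻¹ * (K / V) := by
        intro t ht
        rw [if_neg (Finset.ne_of_mem_erase ht)]
      rw [Finset.sum_congr rfl h4, Finset.sum_const, nsmul_eq_mul,
        Finset.card_erase_of_mem hs]
      have h5 : ((T.card - 1 : ℕ) : ℝ) = c - 1 := by
        rw [Nat.cast_sub hT.card_pos, hcdef]; norm_num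
      rw [h5]; ring
    rw [Finset.sum_congr rfl h2, Finset.sum_const, nsmul_eq_mul, ← hcdef]
    ring
  -- total mass
  have hmass : (∑ _Ab : Matrix (Fin n) (Fin m) 𝒳 × (Fin m → 𝒳), w) = w * (K * V) := by
    rw [Finset.sum_const, nsmul_eq_mul, Finset.card_univ, Fintype.card_prod]
    push_cast; ring
  -- expand the variance
  have hexp : (∑ Ab, w * (f Ab - μ) ^ 2)
      = (∑ Ab : Matrix (Fin n) (Fin m) 𝒳 × (Fin m → 𝒳), w * f Ab ^ 2)
        - 2 * μ * (∑ Ab, w * f Ab)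
        + μ ^ 2 * (∑ _Ab : Matrix (Fin n) (Fin m) 𝒳 × (Fin m → 𝒳), w) := by
    rw [Finset.mul_sum, Finset.mul_sum, ← Finset.sum_sub_distrib, ← Finset.sum_add_distrib]
    exact Finset.sum_congr rfl fun Ab _ => by ring
  rw [hexp, hM2, hmass, ← hμ, hμ', hw']
  have h2m : ((Fintype.card 𝒳 : ℝ) ^ (2 * m))⁻¹ * ((Fintype.card 𝒳 : ℝ) ^ m / c)
      = (V * V * c)⁻¹ * V := by
    rw [hVX, two_mul, pow_add]
    field_simp
  rw [h2m]
  have hKV : (0:ℝ) < K * V := mul_pos hKpos hVpos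
  have hVar : (K * V)⁻¹ * c⁻¹ * c⁻¹ * (c * K + c * (c - 1) * (K / V))
        - 2 * ((K * V)⁻¹ * K) * ((K * V)⁻¹ * K)
        + ((K * V)⁻¹ * K) ^ 2 * ((K * V)⁻¹ * (K * V))
      = (c * V)⁻¹ - (c * V * V)⁻¹ := by
    field_simp
    ring
  rw [hVar]
  have hrhs : (V * V * c)⁻¹ * V = (c * V)⁻¹ := by
    field_simp
  rw [hrhs]
  have : (0:ℝ) ≤ (c * V * V)⁻¹ := by positivity
  linarith
end

section
/- Let X₁, X₂ be random variables and K₁, K₂ random variables on finite sets, with (K₁,K₂) independent of (X₁,X₂). Let φᵢ be deterministic maps and C̃ᵢ = φᵢ(Xᵢ) ⊕ ψᵢ(Kᵢ) in finite abelian groups G₁, G₂. Then I(C̃₁,C̃₂; X₁,X₂) ≤ log(|G₁||G₂|) − H(ψ₁(K₁), ψ₂(K₂)) = D(P_{ψ₁(K₁)ψ₂(K₂)} ‖ Uniform(G₁×G₂)). -/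
/-!
Write `G = G₁ × G₂`, `X = (X₁, X₂)`, `K = (K₁, K₂)` and `C = φ(X) + ψ(K)`. Independence gives
`P(C = c, X = x) = P(X = x) · P(ψ(K) = c - φ(x))`, and `c ↦ c - φ(x)` permutes `G`, so
`H(C, X) = H(X) + H(ψ(K))`. Hence `I(C; X) = H(C) - H(ψ(K))`, and `H(C) ≤ log |G|` by Jensen's
inequality for the concave `t ↦ -t log t`. The divergence from the uniform distribution on `G`
equals `log |G| - H(ψ(K))` by direct computation.
-/

open Finset Real
open scoped Classical BigOperators

section Probability

variable {Ω : Type*} [Fintype Ω] {p : Ω → ℝ}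

lemma pr_nonneg (hp : IsPMF p) (E : Ω → Prop) : 0 ≤ pr p E :=
  Finset.sum_nonneg fun ω _ => by split_ifs <;> simp [hp.1 ω]

lemma pr_congr {E F : Ω → Prop} (h : ∀ ω, E ω ↔ F ω) : pr p E = pr p F := by
  simp only [pr, h]

lemma sum_pr_and_eq_pr {τ : Type*} [Fintype τ] (E : Ω → Prop) (T : Ω → τ) :
    ∑ t, pr p (fun ω => E ω ∧ T ω = t) = pr p E := by
  unfold pr
  rw [Finset.sum_comm]
  refine Finset.sum_congr rfl fun ω _ => ?_
  by_cases h : E ω <;> simp [h]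

lemma IsPMF.sum_pr_eq_one {τ : Type*} [Fintype τ] (hp : IsPMF p) (T : Ω → τ) :
    ∑ t, pr p (fun ω => T ω = t) = 1 := by
  simpa [pr, hp.2] using sum_pr_and_eq_pr (p := p) (fun _ => True) T

lemma pr_and_comp_eq_sum {β : Type*} [Fintype β] (E : Ω → Prop) (K : Ω → β) (P : β → Prop) :
    pr p (fun ω => E ω ∧ P (K ω)) = ∑ k, if P k then pr p (fun ω => E ω ∧ K ω = k) else 0 := by
  rw [← sum_pr_and_eq_pr (p := p) _ K]
  refine Finset.sum_congr rfl fun k _ => ?_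
  split_ifs with hk
  · exact pr_congr fun ω => ⟨fun h => ⟨h.1.1, h.2⟩, fun h => ⟨⟨h.1, h.2 ▸ hk⟩, h.2⟩⟩
  · exact Finset.sum_eq_zero fun ω _ =>
      if_neg fun (h : (E ω ∧ P (K ω)) ∧ K ω = k) => hk (h.2 ▸ h.1.2)

lemma pr_and_comp_eq_mul {α β γ : Type*} [Fintype α] [Fintype β] (X : Ω → α) (K : Ω → β)
    (hind : ∀ x k, pr p (fun ω => X ω = x ∧ K ω = k)
      = pr p (fun ω => X ω = x) * pr p (fun ω => K ω = k))
    (ψ : β → γ) (x : α) (g : γ) :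
    pr p (fun ω => X ω = x ∧ ψ (K ω) = g)
      = pr p (fun ω => X ω = x) * pr p (fun ω => ψ (K ω) = g) := by
  have hmarginal := pr_and_comp_eq_sum (p := p) (fun _ => True) K (ψ · = g)
  simp only [true_and] at hmarginal
  simp only [pr_and_comp_eq_sum (fun ω => X ω = x) K (ψ · = g), hmarginal, hind,
    Finset.mul_sum, mul_ite, mul_zero]

end Probability

section Entropy

lemma Hent_eq_sum_negMulLog {Ω α : Type*} [Fintype Ω] [Fintype α] (p : Ω → ℝ) (X : Ω → α) :
    Hent p X = (∑ a, negMulLog (pr p (fun ω => X ω = a))) / log 2 := by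
  simp only [Hent, negMulLog, logb, Finset.sum_div, ← Finset.sum_neg_distrib]
  exact Finset.sum_congr rfl fun a _ => by ring

lemma sum_negMulLog_le_log_card {S : Type*} [Fintype S] {q : S → ℝ} (h0 : ∀ s, 0 ≤ q s)
    (h1 : ∑ s, q s = 1) : ∑ s, negMulLog (q s) ≤ log (Fintype.card S) := by
  have hN : (0 : ℝ) < Fintype.card S := by
    have : Nonempty S := by
      by_contra h
      simp [not_nonempty_iff.mp h] at h1
    exact_mod_cast Fintype.card_pos
  have hw : ∑ _s : S, (Fintype.card S : ℝ)⁻¹ = 1 := by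
    simp [Finset.card_univ, hN.ne']
  have hjensen := concaveOn_negMulLog.le_map_sum (t := Finset.univ)
    (fun _ _ => inv_nonneg.mpr hN.le) hw (fun s _ => Set.mem_Ici.mpr (h0 s))
  rw [← Finset.smul_sum, ← Finset.smul_sum, h1, smul_eq_mul, smul_eq_mul, mul_one, negMulLog,
    log_inv, neg_mul_neg, mul_le_mul_iff_right₀ (inv_pos.mpr hN)] at hjensen
  exact hjensen

lemma sum_negMulLog_mul {α β : Type*} [Fintype α] [Fintype β] {r : α → ℝ} {q : β → ℝ}
    (hr : ∑ x, r x = 1) (hq : ∑ g, q g = 1) :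
    ∑ x, ∑ g, negMulLog (r x * q g) = ∑ x, negMulLog (r x) + ∑ g, negMulLog (q g) := by
  simp only [negMulLog_mul, Finset.sum_add_distrib, ← Finset.sum_mul, ← Finset.mul_sum, hq, hr,
    one_mul]

lemma Hent_le_logb_card {Ω S : Type*} [Fintype Ω] [Fintype S] {p : Ω → ℝ} (hp : IsPMF p)
    (X : Ω → S) : Hent p X ≤ logb 2 (Fintype.card S) := by
  rw [Hent_eq_sum_negMulLog, logb]
  gcongr
  exact sum_negMulLog_le_log_card (fun _ => pr_nonneg hp _) (hp.sum_pr_eq_one X)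

lemma KL_uniform_eq {S : Type*} [Fintype S] [Nonempty S] {q : S → ℝ} (hq : ∑ s, q s = 1) :
    KL q (fun _ => (Fintype.card S : ℝ)⁻¹)
      = logb 2 (Fintype.card S) + ∑ s, q s * logb 2 (q s) := by
  have hN : (Fintype.card S : ℝ) ≠ 0 := Nat.cast_ne_zero.mpr Fintype.card_ne_zero
  have hterm : ∀ s, q s * logb 2 (q s / (Fintype.card S : ℝ)⁻¹)
      = q s * logb 2 (Fintype.card S) + q s * logb 2 (q s) := by
    intro s
    rcases eq_or_ne (q s) 0 with h | h
    · simp [h]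
    · rw [div_inv_eq_mul, logb_mul h hN]
      ring
  simp only [KL, hterm, Finset.sum_add_distrib, ← Finset.sum_mul, hq, one_mul]

end Entropy

section OneTimePad

variable {Ω α β G : Type*} [Fintype Ω] [Fintype α] [Fintype β] [Fintype G] [AddCommGroup G]
  {p : Ω → ℝ} (X : Ω → α) (K : Ω → β) (φ : α → G) (ψ : β → G)

lemma Hent_add_prod_eq (hp : IsPMF p)
    (hind : ∀ x k, pr p (fun ω => X ω = x ∧ K ω = k)
      = pr p (fun ω => X ω = x) * pr p (fun ω => K ω = k)) :
    Hent p (fun ω => (φ (X ω) + ψ (K ω), X ω)) = Hent p X + Hent p (fun ω => ψ (K ω)) := by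
  have hjoint : ∀ c x, pr p (fun ω => (φ (X ω) + ψ (K ω), X ω) = (c, x))
      = pr p (fun ω => X ω = x) * pr p (fun ω => ψ (K ω) = c - φ x) := by
    intro c x
    rw [← pr_and_comp_eq_mul X K hind]
    refine pr_congr fun ω => ?_
    simp only [Prod.mk.injEq, eq_sub_iff_add_eq']
    exact ⟨fun ⟨h, hx⟩ => ⟨hx, hx ▸ h⟩, fun ⟨hx, h⟩ => ⟨hx ▸ h, hx⟩⟩
  rw [Hent_eq_sum_negMulLog, Hent_eq_sum_negMulLog, Hent_eq_sum_negMulLog, ← add_div,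
    Fintype.sum_prod_type, Finset.sum_comm]
  simp only [hjoint]
  rw [← sum_negMulLog_mul (hp.sum_pr_eq_one X) (hp.sum_pr_eq_one _)]
  exact congrArg (· / log 2) <| Finset.sum_congr rfl fun x _ =>
    Equiv.sum_comp (Equiv.subRight (φ x))
      (fun g => negMulLog (pr p (fun ω => X ω = x) * pr p (fun ω => ψ (K ω) = g)))

lemma MI_add_le (hp : IsPMF p)
    (hind : ∀ x k, pr p (fun ω => X ω = x ∧ K ω = k)
      = pr p (fun ω => X ω = x) * pr p (fun ω => K ω = k)) :
    MI p (fun ω => φ (X ω) + ψ (K ω)) X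
      ≤ logb 2 (Fintype.card G) - Hent p (fun ω => ψ (K ω)) := by
  have hmax := Hent_le_logb_card hp (fun ω => φ (X ω) + ψ (K ω))
  rw [MI, Hent_add_prod_eq X K φ ψ hp hind]
  linarith

end OneTimePad

/-- for C̃ᵢ = φᵢ(Xᵢ) ⊕ ψᵢ(Kᵢ) with (X₁,X₂) ⟂ (K₁,K₂),
I(C̃₁,C̃₂; X₁,X₂) ≤ log(|G₁||G₂|) − H(ψ₁(K₁),ψ₂(K₂)) = D(P_{ψ₁(K₁)ψ₂(K₂)} ‖ Unif). -/
theorem stmt19 {Ω α₁ α₂ β₁ β₂ G₁ G₂ : Type*} [Fintype Ω] [Fintype α₁] [Fintype α₂]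
    [Fintype β₁] [Fintype β₂] [Fintype G₁] [Fintype G₂]
    [AddCommGroup G₁] [AddCommGroup G₂]
    (p : Ω → ℝ) (hp : IsPMF p)
    (X₁ : Ω → α₁) (X₂ : Ω → α₂) (K₁ : Ω → β₁) (K₂ : Ω → β₂)
    (φ₁ : α₁ → G₁) (φ₂ : α₂ → G₂) (ψ₁ : β₁ → G₁) (ψ₂ : β₂ → G₂)
    (hind : ∀ (x : α₁ × α₂) (k : β₁ × β₂),
      pr p (fun ω => (X₁ ω, X₂ ω) = x ∧ (K₁ ω, K₂ ω) = k)
        = pr p (fun ω => (X₁ ω, X₂ ω) = x) * pr p (fun ω => (K₁ ω, K₂ ω) = k)) :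
    MI p (fun ω => (φ₁ (X₁ ω) + ψ₁ (K₁ ω), φ₂ (X₂ ω) + ψ₂ (K₂ ω)))
        (fun ω => (X₁ ω, X₂ ω))
      ≤ Real.logb 2 ((Fintype.card G₁ : ℝ) * (Fintype.card G₂ : ℝ))
        - Hent p (fun ω => (ψ₁ (K₁ ω), ψ₂ (K₂ ω)))
    ∧ Real.logb 2 ((Fintype.card G₁ : ℝ) * (Fintype.card G₂ : ℝ))
        - Hent p (fun ω => (ψ₁ (K₁ ω), ψ₂ (K₂ ω)))
      = KL (fun g : G₁ × G₂ => pr p (fun ω => (ψ₁ (K₁ ω), ψ₂ (K₂ ω)) = g))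
          (fun _ : G₁ × G₂ => ((Fintype.card G₁ : ℝ) * (Fintype.card G₂ : ℝ))⁻¹) := by
  have hcard : (Fintype.card G₁ : ℝ) * Fintype.card G₂ = Fintype.card (G₁ × G₂) := by
    rw [Fintype.card_prod, Nat.cast_mul]
  rw [hcard]
  refine ⟨MI_add_le (fun ω => (X₁ ω, X₂ ω)) (fun ω => (K₁ ω, K₂ ω))
    (fun x => (φ₁ x.1, φ₂ x.2)) (fun k => (ψ₁ k.1, ψ₂ k.2)) hp hind, ?_⟩
  rw [KL_uniform_eq (hp.sum_pr_eq_one _), Hent, sub_neg_eq_add]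
end
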